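/- For every primitive recursive function f : ℕ → ℕ there exists n such that f(x) < A(x, n) for all x; consequently, the Ackermann function A is not primitive recursive. -/
import Mathlib


def A : ℕ → ℕ → ℕ
  | m, 0 => m + 1
  | 0, n + 1 => A 1 n
  | m + 1, n + 1 => A (A m (n + 1)) n
termination_by m n => (n, m)

theorem A_eq_ack : ∀ n m, A m n = ack n m
  | 0, m => by rw [A, ack]
  | n + 1, 0 => by rw [A, ack, A_eq_ack n 1]
  | n + 1, m + 1 => by
    rw [A, ack, A_eq_ack (n + 1) m, A_eq_ack n]

theorem ack_dominates_and_not_primrec :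
    (∀ f : ℕ → ℕ, Nat.Primrec f → ∃ n, ∀ x, f x < A x n) ∧
    ¬ Primrec₂ A := by
  constructor
  · intro f hf
    obtain ⟨m, hm⟩ := exists_lt_ack_of_nat_primrec hf
    exact ⟨m, fun x => (A_eq_ack m x) ▸ hm x⟩
  · intro h
    apply not_primrec₂_ack
    have : ack = fun n m => A m n := by
      funext n m; rw [A_eq_ack]
    rw [this]
    exact h.swap
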